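/- Let p ≥ 1 and m ≥ 1 be integers and define the polynomial P(z) := ∏_{j=1}^{m} ∏_{k=0}^{p−1} (z − e^{2πik/p}/j). Then for every 1 ≤ j ≤ m and 0 ≤ ℓ ≤ p−1, the derivative of P satisfies P'(e^{2πiℓ/p}/j) = e^{−2πiℓ/p} · P'(1/j), and moreover P'(e^{2πiℓ/p}/j) ≠ 0. -/

import Mathlib

/-- The polynomial `P(z) = ∏_{j=1}^{m} ∏_{k=0}^{p-1} (z - e^{2πik/p}/j)`. -/
noncomputable def P (p m : ℕ) (z : ℂ) : ℂ :=
  ∏ j ∈ Finset.Icc 1 m, ∏ k ∈ Finset.range p,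
    (z - Complex.exp (2 * Real.pi * Complex.I * k / p) / (j : ℂ))

/-! Grouping the factors belonging to one `j`, `∏ₖ (z - ζᵏ/j) = z ^ p - j⁻ᵖ`, so `P(z) = Q(z ^ p)`
for the nodal polynomial `Q = ∏ⱼ (X - j⁻ᵖ)`. Hence `P'(z) = p z ^ (p-1) Q'(z ^ p)`, and replacing `z`
by `ω z` with `ω ^ p = 1` multiplies this by `ω ^ (p-1) = ω⁻¹`. The nodes `j⁻ᵖ` are distinct, so `Q'`
does not vanish at them, and neither does `P'` at the roots of `P`. -/

open Finset Polynomial Lagrange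

section PowComp

variable {𝕜 : Type*} [NontriviallyNormedField 𝕜]

theorem deriv_eval_comp_pow (g : 𝕜[X]) (p : ℕ) (z : 𝕜) :
    deriv (fun z => g.eval (z ^ p)) z = g.derivative.eval (z ^ p) * (p * z ^ (p - 1)) :=
  ((g.hasDerivAt _).comp z (hasDerivAt_pow p z)).deriv

theorem deriv_eval_comp_pow_mul_of_pow_eq_one (g : 𝕜[X]) {p : ℕ} {ω : 𝕜} (hω : ω ^ p = 1)
    (z : 𝕜) :
    deriv (fun z => g.eval (z ^ p)) (ω * z) = ω⁻¹ * deriv (fun z => g.eval (z ^ p)) z := by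
  rw [deriv_eval_comp_pow, deriv_eval_comp_pow, mul_pow, hω, one_mul]
  rcases Nat.eq_zero_or_pos p with rfl | hp
  · simp
  have hωinv : ω ^ (p - 1) = ω⁻¹ :=
    eq_inv_of_mul_eq_one_left (by rw [← pow_succ, Nat.sub_add_cancel hp, hω])
  rw [mul_pow, hωinv]
  ring

end PowComp

theorem eval_derivative_nodal_ne_zero {F ι : Type*} [Field F] [DecidableEq ι] {s : Finset ι}
    {v : ι → F} {i : ι} (hvs : Set.InjOn v s) (hi : i ∈ s) :
    (derivative (nodal s v)).eval (v i) ≠ 0 := by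
  simpa [nodalWeight_eq_eval_derivative_nodal hi] using nodalWeight_ne_zero hvs hi

theorem injective_inv_natCast_pow {K : Type*} [Field K] [CharZero K] {p : ℕ} (hp : p ≠ 0) :
    Function.Injective fun j : ℕ => ((j : K)⁻¹) ^ p := by
  intro i j hij
  simp only [inv_pow, inv_inj, ← Nat.cast_pow, Nat.cast_inj] at hij
  exact Nat.pow_left_injective hp hij

theorem Complex.exp_two_pi_I_mul_div_eq_pow (k p : ℕ) :
    Complex.exp (2 * Real.pi * Complex.I * k / p) =
      Complex.exp (2 * Real.pi * Complex.I / p) ^ k := by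
  rw [← Complex.exp_nat_mul]
  ring_nf

theorem Complex.exp_two_pi_I_mul_div_pow_self (k : ℕ) {p : ℕ} (hp : p ≠ 0) :
    Complex.exp (2 * Real.pi * Complex.I * k / p) ^ p = 1 := by
  rw [Complex.exp_two_pi_I_mul_div_eq_pow, pow_right_comm,
    (Complex.isPrimitiveRoot_exp p hp).pow_eq_one, one_pow]

theorem prod_range_sub_exp_mul {p : ℕ} (hp : p ≠ 0) (c z : ℂ) :
    ∏ k ∈ range p, (z - Complex.exp (2 * Real.pi * Complex.I * k / p) * c) = z ^ p - c ^ p := by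
  have hfactor := X_pow_sub_C_eq_prod (Complex.isPrimitiveRoot_exp p hp) (Nat.pos_of_ne_zero hp)
    (rfl : c ^ p = c ^ p)
  simpa [eval_prod, Complex.exp_two_pi_I_mul_div_eq_pow] using (congrArg (eval z) hfactor).symm

theorem P_eq_eval_nodal_comp_pow {p : ℕ} (hp : p ≠ 0) (m : ℕ) :
    P p m = fun z => (nodal (Icc 1 m) fun j => ((j : ℂ)⁻¹) ^ p).eval (z ^ p) := by
  funext z
  rw [P, eval_nodal]
  refine prod_congr rfl fun j _ => ?_
  simp_rw [div_eq_mul_inv]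
  exact prod_range_sub_exp_mul hp _ z

theorem P_deriv_symmetry_general (p m : ℕ) (hp : 1 ≤ p) :
    ∀ j : ℕ, 1 ≤ j → j ≤ m → ∀ ℓ : ℕ, ℓ < p →
      deriv (P p m) (Complex.exp (2 * Real.pi * Complex.I * ℓ / p) / (j : ℂ)) =
        Complex.exp (-(2 * Real.pi * Complex.I * ℓ / p)) * deriv (P p m) (1 / (j : ℂ)) ∧
      deriv (P p m) (Complex.exp (2 * Real.pi * Complex.I * ℓ / p) / (j : ℂ)) ≠ 0 := by
  intro j hj1 hjm ℓ _
  have hp₀ : p ≠ 0 := by omega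
  rw [P_eq_eval_nodal_comp_pow hp₀, div_eq_mul_one_div,
    deriv_eval_comp_pow_mul_of_pow_eq_one _ (Complex.exp_two_pi_I_mul_div_pow_self ℓ hp₀),
    Complex.exp_neg]
  refine ⟨rfl, mul_ne_zero (inv_ne_zero (Complex.exp_ne_zero _)) ?_⟩
  rw [deriv_eval_comp_pow, one_div]
  have hnodes : Set.InjOn (fun j : ℕ => ((j : ℂ)⁻¹) ^ p) (Icc 1 m) :=
    (injective_inv_natCast_pow hp₀).injOn
  have hj : (j : ℂ)⁻¹ ≠ 0 := inv_ne_zero (Nat.cast_ne_zero.2 (by omega))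
  refine mul_ne_zero (eval_derivative_nodal_ne_zero (i := j) hnodes (mem_Icc.2 ⟨hj1, hjm⟩)) ?_
  exact mul_ne_zero (Nat.cast_ne_zero.2 hp₀) (pow_ne_zero _ hj)

/-- For `P(z) = ∏_{j=1}^{m} ∏_{k=0}^{p-1} (z - e^{2πik/p}/j)`, for every `1 ≤ j ≤ m` and
`0 ≤ ℓ ≤ p-1` one has `P'(e^{2πiℓ/p}/j) = e^{-2πiℓ/p} · P'(1/j)` and
`P'(e^{2πiℓ/p}/j) ≠ 0`. -/
theorem P_deriv_symmetry (p m : ℕ) (hp : 1 ≤ p) (hm : 1 ≤ m) :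
    ∀ j : ℕ, 1 ≤ j → j ≤ m → ∀ ℓ : ℕ, ℓ < p →
      deriv (P p m) (Complex.exp (2 * Real.pi * Complex.I * ℓ / p) / (j : ℂ)) =
        Complex.exp (-(2 * Real.pi * Complex.I * ℓ / p)) * deriv (P p m) (1 / (j : ℂ)) ∧
      deriv (P p m) (Complex.exp (2 * Real.pi * Complex.I * ℓ / p) / (j : ℂ)) ≠ 0 :=
  P_deriv_symmetry_general p m hp
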